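/- arXiv:2502.01244 — 2 statements merged into one kernel-verified Lean document; each statement's English description precedes it below -/
import Mathlib

section
/- Let T ≥ 1 be an integer and let z, z' ∈ [0,1]^T satisfy z ⪰ z'. If μ ∈ [0,1] satisfies μ ≥ μ_z, then Ψ(z,μ) ≤ Ψ(z',μ). -/
open MeasureTheory Set

/-- Extended-real logarithm: `log ⊤ = ⊤`, `log x = -∞` for `x ≤ 0` (in particular `log 0 = -∞`). -/
noncomputable def elog (x : EReal) : EReal :=
  if x = ⊤ then ⊤ else if x ≤ 0 then ⊥ else ((Real.log x.toReal : ℝ) : EReal)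

/-- Lower endpoint `-1/(1-μ)` of the betting interval, with the convention `1/0 = +∞`. -/
noncomputable def betLower (μ : ℝ) : EReal := if μ = 1 then ⊥ else ((-(1 - μ)⁻¹ : ℝ) : EReal)

/-- Upper endpoint `1/μ` of the betting interval, with the convention `1/0 = +∞`. -/
noncomputable def betUpper (μ : ℝ) : EReal := if μ = 0 then ⊤ else ((μ⁻¹ : ℝ) : EReal)

/-- The betting interval `A_μ = [-1/(1-μ), 1/μ]` (as a set of extended reals). -/
noncomputable def betSet (μ : ℝ) : Set EReal := Set.Icc (betLower μ) (betUpper μ)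

/-- `(1/T) ∑_t log(1 + α (z_t - μ))`, with EReal conventions (`0 * ±∞ = 0`, `log 0 = -∞`). -/
noncomputable def betTerm {T : ℕ} (z : Fin T → ℝ) (μ : ℝ) (α : EReal) : EReal :=
  (((T : ℝ)⁻¹ : ℝ) : EReal) * ∑ t : Fin T, elog (1 + α * ((z t - μ : ℝ) : EReal))

/-- `Ψ(z, μ) = sup_{α ∈ A_μ} (1/T) ∑_t log(1 + α (z_t - μ))`. -/
noncomputable def Psi {T : ℕ} (z : Fin T → ℝ) (μ : ℝ) : EReal :=
  ⨆ α ∈ betSet μ, betTerm z μ α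

/-- `μ_z = (1/T) ∑_t z_t`. -/
noncomputable def muz {T : ℕ} (z : Fin T → ℝ) : ℝ := (T : ℝ)⁻¹ * ∑ t, z t
open Finset

/-!
For a bet `α ≤ 0` every summand `log (1 + α (z_t - μ))` is antitone in `z_t`, so lowering `z`
can only raise the objective. For a finite bet `α ≥ 0`, `log (1 + x) ≤ x` bounds the objective
at `z` by `α (μ_z - μ) ≤ 0`, the value of the objective at `z'` for the admissible bet `α = 0`.
The infinite bet `α = ⊤` is admissible only for `μ = 0`, where `μ_z ≤ μ` forces `z = 0`.
-/

theorem EReal.coe_finset_sum {ι : Type*} (s : Finset ι) (f : ι → ℝ) :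
    ((∑ i ∈ s, f i : ℝ) : EReal) = ∑ i ∈ s, (f i : EReal) :=
  map_sum (⟨⟨Real.toEReal, EReal.coe_zero⟩, EReal.coe_add⟩ : ℝ →+ EReal) f s

theorem elog_monotone : Monotone elog := by
  intro x y hxy
  by_cases hy : y = ⊤
  · simp [elog, hy]
  have hx : x ≠ ⊤ := ne_top_of_le_ne_top hy hxy
  by_cases hx0 : x ≤ 0
  · simp [elog, hx, hx0]
  have hy0 : ¬y ≤ 0 := fun h => hx0 (hxy.trans h)
  lift x to ℝ using ⟨hx, ne_bot_of_gt (not_le.1 hx0)⟩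
  lift y to ℝ using ⟨hy, ne_bot_of_gt (not_le.1 hy0)⟩
  simp only [elog, hx, hy, hx0, hy0, if_false, EReal.toReal_coe, EReal.coe_le_coe_iff]
  exact Real.log_le_log (by exact_mod_cast not_le.1 hx0) (by exact_mod_cast hxy)

theorem elog_one : elog 1 = 0 := by
  have h : (1 : EReal) ≠ ⊤ := EReal.coe_ne_top 1
  simp [elog, h]

theorem elog_coe_le_sub_one (x : ℝ) : elog x ≤ ((x - 1 : ℝ) : EReal) := by
  unfold elog
  split_ifs with htop hx
  · simp at htop
  · exact bot_le
  · rw [EReal.toReal_coe, EReal.coe_le_coe_iff]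
    exact Real.log_le_sub_one_of_pos (by exact_mod_cast not_le.1 hx)

theorem zero_mem_betSet {μ : ℝ} (hμ : μ ∈ Icc (0 : ℝ) 1) : (0 : EReal) ∈ betSet μ := by
  constructor
  · unfold betLower
    split_ifs
    · exact bot_le
    · exact EReal.coe_nonpos.2 (neg_nonpos.2 (inv_nonneg.2 (sub_nonneg.2 hμ.2)))
  · unfold betUpper
    split_ifs
    · exact le_top
    · exact EReal.coe_nonneg.2 (inv_nonneg.2 hμ.1)

theorem eq_zero_of_top_mem_betSet {μ : ℝ} (h : ⊤ ∈ betSet μ) : μ = 0 := by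
  by_contra hμ
  simpa [betUpper, hμ] using h.2

section betTerm

variable {T : ℕ} {z z' : Fin T → ℝ} {μ : ℝ} {α : EReal}

theorem betTerm_eq_zero (h : ∀ t, α * ((z t - μ : ℝ) : EReal) = 0) : betTerm z μ α = 0 := by
  simp only [betTerm, h, add_zero, elog_one, sum_const_zero, mul_zero]

theorem betTerm_antitone_of_nonpos (hα : α ≤ 0) (hz : ∀ t, z' t ≤ z t) :
    betTerm z μ α ≤ betTerm z' μ α := by
  refine mul_le_mul_of_nonneg_left (sum_le_sum fun t _ => elog_monotone ?_)
    (EReal.coe_nonneg.2 (by positivity))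
  rw [mul_comm α, mul_comm α]
  gcongr 1 + ?_
  exact EReal.mul_le_mul_of_nonpos_right (EReal.coe_le_coe_iff.2 (by linarith [hz t])) hα

theorem betTerm_coe_le (a : ℝ) :
    betTerm z μ a ≤ (((T : ℝ)⁻¹ * ∑ t, a * (z t - μ) : ℝ) : EReal) := by
  rw [EReal.coe_mul, EReal.coe_finset_sum]
  refine mul_le_mul_of_nonneg_left (sum_le_sum fun t _ => ?_) (EReal.coe_nonneg.2 (by positivity))
  simpa using elog_coe_le_sub_one (1 + a * (z t - μ))

theorem sum_sub_nonpos_of_muz_le (h : muz z ≤ μ) : ∑ t, (z t - μ) ≤ 0 := by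
  rw [sum_sub_distrib, sum_const, card_univ, Fintype.card_fin, nsmul_eq_mul, sub_nonpos]
  rcases Nat.eq_zero_or_pos T with rfl | hT
  · simp
  · exact (inv_mul_le_iff₀ (by exact_mod_cast hT)).1 h

theorem betTerm_nonpos_of_nonneg (hα : α ∈ betSet μ) (hα0 : 0 ≤ α) (hz : ∀ t, 0 ≤ z t)
    (hμz : muz z ≤ μ) : betTerm z μ α ≤ 0 := by
  have hsum := sum_sub_nonpos_of_muz_le hμz
  induction α using EReal.rec with
  | bot => simp at hα0
  | coe a =>
    refine (betTerm_coe_le a).trans (EReal.coe_nonpos.2 ?_)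
    rw [← mul_sum]
    exact mul_nonpos_of_nonneg_of_nonpos (by positivity)
      (mul_nonpos_of_nonneg_of_nonpos (EReal.coe_nonneg.1 hα0) hsum)
  | top =>
    obtain rfl := eq_zero_of_top_mem_betSet hα
    simp only [sub_zero] at hsum
    have hz0 := (sum_eq_zero_iff_of_nonneg fun t _ => hz t).1
      (le_antisymm hsum (sum_nonneg fun t _ => hz t))
    exact (betTerm_eq_zero fun t => by
      rw [hz0 t (mem_univ t), sub_zero, EReal.coe_zero, mul_zero]).le

end betTerm

theorem zero_le_Psi {T : ℕ} (z : Fin T → ℝ) {μ : ℝ} (hμ : μ ∈ Icc (0 : ℝ) 1) : 0 ≤ Psi z μ :=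
  (betTerm_eq_zero (z := z) (μ := μ) fun _ => zero_mul _).ge.trans
    (le_biSup (betTerm z μ) (zero_mem_betSet hμ))

theorem psi_le_of_ge_general {T : ℕ} (z z' : Fin T → ℝ)
    (hz : ∀ t, z t ∈ Set.Icc (0 : ℝ) 1)
    (hord : ∀ t, z' t ≤ z t) (μ : ℝ) (hμ : μ ∈ Set.Icc (0 : ℝ) 1) (hμz : muz z ≤ μ) :
    Psi z μ ≤ Psi z' μ := by
  refine iSup₂_le fun α hα => ?_
  rcases le_total α 0 with hα0 | hα0
  · exact (betTerm_antitone_of_nonpos hα0 hord).trans (le_biSup _ hα)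
  · exact (betTerm_nonpos_of_nonneg hα hα0 (fun t => (hz t).1) hμz).trans (zero_le_Psi z' hμ)

/-- If `z ⪰ z'` (coordinatewise) with values in `[0,1]` and `μ ∈ [0,1]` with `μ ≥ μ_z`,
then `Ψ(z, μ) ≤ Ψ(z', μ)`. -/
theorem psi_le_of_ge {T : ℕ} (hT : 1 ≤ T) (z z' : Fin T → ℝ)
    (hz : ∀ t, z t ∈ Set.Icc (0 : ℝ) 1) (hz' : ∀ t, z' t ∈ Set.Icc (0 : ℝ) 1)
    (hord : ∀ t, z' t ≤ z t) (μ : ℝ) (hμ : μ ∈ Set.Icc (0 : ℝ) 1) (hμz : muz z ≤ μ) :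
    Psi z μ ≤ Psi z' μ :=
  psi_le_of_ge_general z z' hz hord μ hμ hμz
end

section
/- Finite reduction of the lower CDF band. Let x_1,…,x_T ∈ [0,1], let x^{(1)} ≤ x^{(2)} ≤ … ≤ x^{(T)} be the sorted values, and set x^{(0)} = 0, x^{(T+1)} = 1. Let F̂(y) = (1/T)·card{t ∈ [1:T] : x_t ≤ y} and C(y) = card{t ∈ [1:T] : x_t ≤ y}. Then for every y ∈ [0,1] and δ ∈ (0,1], sup_{y_- ∈ [0,y]} kl_-^{-1}( F̂(y_-), (1/T) log(2√T / ((y − y_-)δ)) ) = max_{t ∈ [0:C(y)]} kl_-^{-1}( t/T, (1/T) log(2√T / ((y − x^{(t)})δ)) ), where log(2√T/(0·δ)) is interpreted as +∞. -/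
open MeasureTheory Set

/-- The binary relative entropy `kl(p, q)`, valued in the extended reals, with
`kl(0,q) = log(1/(1-q))`, `kl(1,q) = log(1/q)`, `kl(p,0) = +∞` for `p > 0` and
`kl(p,1) = +∞` for `p < 1`. -/
noncomputable def bkl (p q : ℝ) : EReal :=
  if p = 0 then (if q = 1 then ⊤ else ((Real.log (1 / (1 - q)) : ℝ) : EReal))
  else if p = 1 then (if q = 0 then ⊤ else ((Real.log (1 / q) : ℝ) : EReal))
  else if q = 0 ∨ q = 1 then ⊤
  else ((p * Real.log (p / q) + (1 - p) * Real.log ((1 - p) / (1 - q)) : ℝ) : EReal)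

/-- The upper inverse `kl_+^{-1}(p, C) = sup {q ∈ [0,1] : kl(p,q) ≤ C}`. -/
noncomputable def klInvPlus (p : ℝ) (C : EReal) : ℝ :=
  sSup {q : ℝ | q ∈ Set.Icc (0 : ℝ) 1 ∧ bkl p q ≤ C}

/-- The lower inverse `kl_-^{-1}(p, C) = inf {q ∈ [0,1] : kl(p,q) ≤ C}`. -/
noncomputable def klInvMinus (p : ℝ) (C : EReal) : ℝ :=
  sInf {q : ℝ | q ∈ Set.Icc (0 : ℝ) 1 ∧ bkl p q ≤ C}

/-- `log(2√T/(g·δ))`, interpreted as `+∞` when `g = 0`. -/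
noncomputable def bnd (T : ℕ) (g δ : ℝ) : EReal :=
  if g = 0 then ⊤ else ((Real.log (2 * Real.sqrt T / (g * δ)) : ℝ) : EReal)

/-- `C(y) = card {t ∈ [1:T] : x_t ≤ y}`. -/
noncomputable def cnt {T : ℕ} (x : Fin T → ℝ) (y : ℝ) : ℕ :=
  (Finset.univ.filter fun t => x t ≤ y).card

/-- The empirical CDF `F̂(y) = C(y)/T`. -/
noncomputable def empCDF {T : ℕ} (x : Fin T → ℝ) (y : ℝ) : ℝ := (cnt x y : ℝ) / T

/-!
For `y₋ ∈ [0, y]` with `k = C(y₋)` we have `F̂(y₋) = k/T` and `x^{(k)} ≤ y₋`; the wider gap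
`y - x^{(k)}` gives a smaller threshold, hence a larger `kl_-^{-1}`, so the `t = k` term dominates.
Conversely, for `t ≤ C(y)` the point `y₋ = x^{(t)} ≤ y` has `F̂(y₋) ≥ t/T`, and `kl_-^{-1}(·, c)`
is nondecreasing because `kl(·, q)` is nondecreasing on `[q, 1]`.
-/

open InformationTheory

lemma monotoneOn_klFun : MonotoneOn klFun (Ici 1) := by
  refine monotoneOn_of_deriv_nonneg (convex_Ici 1) continuous_klFun.continuousOn ?_ ?_ <;>
    rw [interior_Ici] <;> intro x (hx : 1 < x)
  · exact (hasDerivAt_klFun (by positivity)).differentiableAt.differentiableWithinAt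
  · rw [deriv_klFun]
    exact Real.log_nonneg hx.le

lemma antitoneOn_klFun : AntitoneOn klFun (Icc 0 1) := by
  refine antitoneOn_of_deriv_nonpos (convex_Icc 0 1) continuous_klFun.continuousOn ?_ ?_ <;>
    rw [interior_Icc] <;> intro x ⟨hx₀, hx₁⟩
  · exact (hasDerivAt_klFun hx₀.ne').differentiableAt.differentiableWithinAt
  · rw [deriv_klFun]
    exact Real.log_nonpos hx₀.le hx₁.le

lemma bkl_self (p : ℝ) : bkl p p = 0 := by
  unfold bkl
  split_ifs <;> simp_all [eq_comm]

lemma bkl_zero_right {p : ℝ} (hp : p ≠ 0) : bkl p 0 = ⊤ := by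
  unfold bkl
  split_ifs <;> simp_all

/-- The f-divergence form of `kl`, which makes its monotonicity in `p` on `[q, 1]` visible. -/
lemma bkl_eq_klFun {p q : ℝ} (hq : q ∈ Ioo 0 1) :
    bkl p q = ((q * klFun (p / q) + (1 - q) * klFun ((1 - p) / (1 - q)) : ℝ) : EReal) := by
  obtain ⟨hq₀, hq₁⟩ := hq
  have h1q : 1 - q ≠ 0 := by linarith
  have hlog : bkl p q = ((p * Real.log (p / q) + (1 - p) * Real.log ((1 - p) / (1 - q)) : ℝ) :
      EReal) := by
    unfold bkl
    split_ifs <;> simp_all [hq₀.ne', hq₁.ne]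
  rw [hlog, EReal.coe_eq_coe_iff, klFun_apply, klFun_apply]
  field_simp
  ring

lemma bkl_le_bkl_of_lt_of_le {p₁ p₂ q : ℝ} (hq : 0 ≤ q) (hqp : q < p₁) (hp : p₁ ≤ p₂)
    (hp₂ : p₂ ≤ 1) : bkl p₁ q ≤ bkl p₂ q := by
  rcases hq.eq_or_lt with rfl | hq₀
  · rw [bkl_zero_right (p := p₂) (by linarith)]
    exact le_top
  have hq₁ : q < 1 := by linarith
  have h1q : 0 < 1 - q := by linarith
  rw [bkl_eq_klFun ⟨hq₀, hq₁⟩, bkl_eq_klFun ⟨hq₀, hq₁⟩, EReal.coe_le_coe_iff]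
  refine add_le_add (mul_le_mul_of_nonneg_left ?_ hq₀.le) (mul_le_mul_of_nonneg_left ?_ h1q.le)
  · refine monotoneOn_klFun ?_ ?_ (by gcongr) <;>
      rw [mem_Ici, one_le_div hq₀] <;> linarith
  · refine antitoneOn_klFun ⟨div_nonneg (by linarith) h1q.le, ?_⟩
      ⟨div_nonneg (by linarith) h1q.le, ?_⟩ (div_le_div_of_nonneg_right (by linarith) h1q.le) <;>
      rw [div_le_one h1q] <;> linarith

lemma klInvMinus_nonneg (p : ℝ) (C : EReal) : 0 ≤ klInvMinus p C :=
  Real.sInf_nonneg fun _ hq => hq.1.1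

lemma klInvMinus_le_one (p : ℝ) (C : EReal) : klInvMinus p C ≤ 1 := by
  rcases eq_empty_or_nonempty {q : ℝ | q ∈ Icc 0 1 ∧ bkl p q ≤ C} with h | ⟨q, hq⟩
  · rw [klInvMinus, h, Real.sInf_empty]
    exact zero_le_one
  · exact (csInf_le ⟨0, fun _ hr => hr.1.1⟩ hq).trans hq.1.2

lemma klInvMinus_le_self {p : ℝ} (hp : p ∈ Icc 0 1) {C : EReal} (hC : 0 ≤ C) :
    klInvMinus p C ≤ p :=
  csInf_le ⟨0, fun _ hq => hq.1.1⟩ ⟨hp, (bkl_self p).trans_le hC⟩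

lemma klInvMinus_le_klInvMinus {p₁ p₂ : ℝ} {C₁ C₂ : EReal} (hp₁ : 0 ≤ p₁) (hp : p₁ ≤ p₂)
    (hp₂ : p₂ ≤ 1) (hC₂ : 0 ≤ C₂) (hC : C₂ ≤ C₁) : klInvMinus p₁ C₁ ≤ klInvMinus p₂ C₂ := by
  refine le_csInf ⟨p₂, ⟨hp₁.trans hp, hp₂⟩, (bkl_self p₂).trans_le hC₂⟩ ?_
  rintro q ⟨hq, hbkl⟩
  rcases le_or_gt p₁ q with hpq | hqp
  · exact (klInvMinus_le_self ⟨hp₁, hp.trans hp₂⟩ (hC₂.trans hC)).trans hpq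
  · exact csInf_le ⟨0, fun _ hr => hr.1.1⟩
      ⟨hq, ((bkl_le_bkl_of_lt_of_le hq.1 hqp hp hp₂).trans hbkl).trans hC⟩

lemma bnd_nonneg {T : ℕ} (hT : 1 ≤ T) {g δ : ℝ} (hg : g ∈ Icc 0 1) (hδ : δ ∈ Ioc 0 1) :
    0 ≤ bnd T g δ := by
  unfold bnd
  split_ifs with h
  · exact le_top
  have hg₀ : 0 < g := hg.1.lt_of_ne' h
  have hT₁ : 1 ≤ Real.sqrt T := Real.one_le_sqrt.2 (by exact_mod_cast hT)
  refine EReal.coe_nonneg.2 (Real.log_nonneg ?_)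
  rw [le_div_iff₀ (mul_pos hg₀ hδ.1)]
  nlinarith [mul_le_one₀ hg.2 hδ.1.le hδ.2]

lemma bnd_anti {T : ℕ} (hT : 1 ≤ T) {g₁ g₂ δ : ℝ} (hδ : 0 < δ) (hg₂ : 0 ≤ g₂) (hg : g₂ ≤ g₁) :
    bnd T g₁ δ ≤ bnd T g₂ δ := by
  unfold bnd
  rcases hg₂.eq_or_lt with rfl | hg₂
  · rw [if_pos rfl]
    exact le_top
  rw [if_neg hg₂.ne', if_neg (hg₂.trans_le hg).ne', EReal.coe_le_coe_iff]
  have hT₀ : 0 < Real.sqrt T := Real.sqrt_pos.2 (by exact_mod_cast hT)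
  have hg₁ : 0 < g₁ := hg₂.trans_le hg
  exact Real.log_le_log (by positivity) (by gcongr)

lemma klInvMinus_band_le {T : ℕ} (hT : 1 ≤ T) {δ y p₁ p₂ g₁ g₂ : ℝ} (hδ : δ ∈ Ioc 0 1)
    (hy : y ≤ 1) (hp₁ : 0 ≤ p₁) (hp : p₁ ≤ p₂) (hp₂ : p₂ ≤ 1) (hg₁ : 0 ≤ g₁) (hg : g₁ ≤ g₂)
    (hg₂ : g₂ ≤ y) :
    klInvMinus p₁ ((((T : ℝ)⁻¹ : ℝ) : EReal) * bnd T (y - g₂) δ) ≤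
      klInvMinus p₂ ((((T : ℝ)⁻¹ : ℝ) : EReal) * bnd T (y - g₁) δ) := by
  have hT₀ : (0 : EReal) ≤ (((T : ℝ)⁻¹ : ℝ) : EReal) := EReal.coe_nonneg.2 (by positivity)
  refine klInvMinus_le_klInvMinus hp₁ hp hp₂ ?_ ?_
  · exact mul_nonneg hT₀ (bnd_nonneg hT ⟨by linarith, by linarith⟩ hδ)
  · exact mul_le_mul_of_nonneg_left (bnd_anti hT hδ.1 (by linarith) (by linarith)) hT₀

lemma cnt_comp_perm {T : ℕ} (x : Fin T → ℝ) (σ : Equiv.Perm (Fin T)) (y : ℝ) :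
    cnt (x ∘ σ) y = cnt x y :=
  Finset.card_equiv σ (by simp)

lemma cnt_mono {T : ℕ} (x : Fin T → ℝ) : Monotone (cnt x) := fun _ _ h =>
  Finset.card_le_card fun _ ht => by
    simp only [Finset.mem_filter, Finset.mem_univ, true_and] at ht ⊢
    exact ht.trans h

lemma cnt_le {T : ℕ} (x : Fin T → ℝ) (y : ℝ) : cnt x y ≤ T :=
  (Finset.card_filter_le _ _).trans_eq (Finset.card_fin T)

lemma Monotone.lt_cnt_iff {T : ℕ} {a : Fin T → ℝ} (ha : Monotone a) (i : Fin T) (y : ℝ) :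
    (i : ℕ) < cnt a y ↔ a i ≤ y := by
  constructor
  · intro hi
    by_contra! hy
    have hsub : Finset.univ.filter (fun j => a j ≤ y) ⊆ Finset.Iio i := fun j hj => by
      simp only [Finset.mem_filter, Finset.mem_univ, true_and] at hj
      exact Finset.mem_Iio.2 (ha.reflect_lt (hj.trans_lt hy))
    exact hi.not_ge ((Finset.card_le_card hsub).trans_eq (Fin.card_Iio i))
  · intro hy
    have hsub : Finset.Iic i ⊆ Finset.univ.filter (fun j => a j ≤ y) := fun j hj => by
      simp only [Finset.mem_filter, Finset.mem_univ, true_and]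
      exact (ha (Finset.mem_Iic.1 hj)).trans hy
    exact Nat.lt_of_succ_le ((Fin.card_Iic i).symm.trans_le (Finset.card_le_card hsub))

section OrderStatistics

variable {T : ℕ} {x : Fin T → ℝ} {s : ℕ → ℝ}

lemma monotone_orderStat (hsmono : ∀ i j, i ≤ j → j ≤ T + 1 → s i ≤ s j) :
    Monotone fun i : Fin T => s (i + 1) := fun i j hij =>
  hsmono _ _ (Nat.succ_le_succ hij) (by omega)

lemma cnt_eq_cnt_orderStat {σ : Equiv.Perm (Fin T)} (hσ : ∀ t : Fin T, s (t + 1) = x (σ t))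
    (y : ℝ) : cnt x y = cnt (fun i : Fin T => s (i + 1)) y := by
  rw [← cnt_comp_perm x σ]
  congr 1
  exact funext fun t => (hσ t).symm

lemma orderStat_cnt_le (hs0 : s 0 = 0) (hsmono : ∀ i j, i ≤ j → j ≤ T + 1 → s i ≤ s j)
    {σ : Equiv.Perm (Fin T)} (hσ : ∀ t : Fin T, s (t + 1) = x (σ t)) {y : ℝ} (hy : 0 ≤ y) :
    s (cnt x y) ≤ y := by
  rw [cnt_eq_cnt_orderStat hσ]
  cases h : cnt (fun i : Fin T => s (i + 1)) y with
  | zero => rwa [hs0]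
  | succ k =>
    have hk : k < T := by
      have := cnt_le (fun i : Fin T => s (i + 1)) y
      omega
    exact ((monotone_orderStat hsmono).lt_cnt_iff ⟨k, hk⟩ y).1 (by simp [h])

lemma le_cnt_orderStat (hsmono : ∀ i j, i ≤ j → j ≤ T + 1 → s i ≤ s j)
    {σ : Equiv.Perm (Fin T)} (hσ : ∀ t : Fin T, s (t + 1) = x (σ t)) {t : ℕ} (ht : t ≤ T) :
    t ≤ cnt x (s t) := by
  rw [cnt_eq_cnt_orderStat hσ]
  cases t with
  | zero => exact Nat.zero_le _
  | succ k => exact ((monotone_orderStat hsmono).lt_cnt_iff ⟨k, ht⟩ _).2 le_rfl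

end OrderStatistics

lemma biSup_le_biSup_of_forall_exists_le {ι κ : Type*} {P : ι → Prop} {Q : κ → Prop}
    {f : ι → ℝ} {g : κ → ℝ} (hg₀ : ∀ j, 0 ≤ g j) {b : ℝ} (hgb : ∀ j, g j ≤ b)
    (h : ∀ i, P i → ∃ j, Q j ∧ f i ≤ g j) :
    ⨆ (i) (_ : P i), f i ≤ ⨆ (j) (_ : Q j), g j := by
  have h₀ : 0 ≤ ⨆ (j) (_ : Q j), g j := Real.iSup_nonneg fun j => Real.iSup_nonneg fun _ => hg₀ j
  have hbdd : BddAbove (range fun j => ⨆ (_ : Q j), g j) :=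
    ⟨b, by rintro _ ⟨j, rfl⟩; exact Real.iSup_le (fun _ => hgb j) ((hg₀ j).trans (hgb j))⟩
  refine Real.iSup_le (fun i => Real.iSup_le (fun hi => ?_) h₀) h₀
  obtain ⟨j, hj, hfg⟩ := h i hi
  exact le_ciSup_of_le hbdd j (by rwa [ciSup_pos hj])

theorem lower_band_finite_reduction_general {T : ℕ} (hT : 1 ≤ T) (x : Fin T → ℝ) (s : ℕ → ℝ)
    (hs0 : s 0 = 0)
    (hsmono : ∀ i j, i ≤ j → j ≤ T + 1 → s i ≤ s j)
    (hperm : ∃ σ : Equiv.Perm (Fin T), ∀ t : Fin T, s (t + 1) = x (σ t))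
    (y : ℝ) (hy : y ∈ Set.Icc (0 : ℝ) 1) (δ : ℝ) (hδ : δ ∈ Set.Ioc (0 : ℝ) 1) :
    ⨆ ym ∈ Set.Icc (0 : ℝ) y,
        klInvMinus (empCDF x ym) ((((T : ℝ)⁻¹ : ℝ) : EReal) * bnd T (y - ym) δ) =
      ⨆ t ∈ Finset.Icc 0 (cnt x y),
        klInvMinus ((t : ℝ) / T) ((((T : ℝ)⁻¹ : ℝ) : EReal) * bnd T (y - s t) δ) := by
  obtain ⟨σ, hσ⟩ := hperm
  unfold empCDF
  have hfrac {k : ℕ} (hk : k ≤ T) : (k : ℝ) / T ∈ Icc 0 1 :=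
    ⟨by positivity, div_le_one_of_le₀ (by exact_mod_cast hk) (Nat.cast_nonneg T)⟩
  have hs_nonneg {t : ℕ} (ht : t ≤ T) : 0 ≤ s t := hs0 ▸ hsmono 0 t t.zero_le (by omega)
  apply le_antisymm
  · refine biSup_le_biSup_of_forall_exists_le (fun _ => klInvMinus_nonneg _ _)
      (fun _ => klInvMinus_le_one _ _) fun ym hym => ?_
    have hk := cnt_le x ym
    refine ⟨cnt x ym, Finset.mem_Icc.2 ⟨Nat.zero_le _, cnt_mono x hym.2⟩, ?_⟩
    exact klInvMinus_band_le hT hδ hy.2 (hfrac hk).1 le_rfl (hfrac hk).2 (hs_nonneg hk)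
      (orderStat_cnt_le hs0 hsmono hσ hym.1) hym.2
  · refine biSup_le_biSup_of_forall_exists_le (fun _ => klInvMinus_nonneg _ _)
      (fun _ => klInvMinus_le_one _ _) fun t ht => ?_
    have htT : t ≤ T := (Finset.mem_Icc.1 ht).2.trans (cnt_le x y)
    have hsty : s t ≤ y :=
      (hsmono _ _ (Finset.mem_Icc.1 ht).2 ((cnt_le x y).trans T.le_succ)).trans
        (orderStat_cnt_le hs0 hsmono hσ hy.1)
    refine ⟨s t, ⟨hs_nonneg htT, hsty⟩, ?_⟩
    exact klInvMinus_band_le hT hδ hy.2 (hfrac htT).1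
      (by gcongr; exact le_cnt_orderStat hsmono hσ htT) (hfrac (cnt_le x _)).2
      (hs_nonneg htT) le_rfl hsty

/-- Finite reduction of the lower CDF band: the supremum over `ym ∈ [0, y]` of the lower kl
inverse is attained on the finite grid of (sorted) data points `x^{(t)}`. Here `s`
enumerates the order statistics, with `s 0 = 0` and `s (T+1) = 1`. -/
theorem lower_band_finite_reduction {T : ℕ} (hT : 1 ≤ T) (x : Fin T → ℝ)
    (hx : ∀ t, x t ∈ Set.Icc (0 : ℝ) 1) (s : ℕ → ℝ)
    (hs0 : s 0 = 0) (hsT : s (T + 1) = 1)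
    (hsmono : ∀ i j, i ≤ j → j ≤ T + 1 → s i ≤ s j)
    (hperm : ∃ σ : Equiv.Perm (Fin T), ∀ t : Fin T, s (t + 1) = x (σ t))
    (y : ℝ) (hy : y ∈ Set.Icc (0 : ℝ) 1) (δ : ℝ) (hδ : δ ∈ Set.Ioc (0 : ℝ) 1) :
    ⨆ ym ∈ Set.Icc (0 : ℝ) y,
        klInvMinus (empCDF x ym) ((((T : ℝ)⁻¹ : ℝ) : EReal) * bnd T (y - ym) δ) =
      ⨆ t ∈ Finset.Icc 0 (cnt x y),
        klInvMinus ((t : ℝ) / T) ((((T : ℝ)⁻¹ : ℝ) : EReal) * bnd T (y - s t) δ) :=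
  lower_band_finite_reduction_general hT x s hs0 hsmono hperm y hy δ hδ
end
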